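/- arXiv:2507.14258 — 3 statements merged into one kernel-verified Lean document; each statement's English description precedes it below -/
import Mathlib

section
/- In a well-founded abstract argumentation framework, every complete extension is a grounded extension, i.e., it is a minimal (with respect to set inclusion) complete extension. -/
/-- A set of arguments `S` attacks an argument `α` if some `β ∈ S` attacks `α`. -/
def attacks {A : Type*} (R : A → A → Prop) (S : Set A) (α : A) : Prop :=
  ∃ β ∈ S, R β α

/-- A set of arguments `S` is conflict-free if no argument in `S` is attacked by `S`. -/
def conflictFree {A : Type*} (R : A → A → Prop) (S : Set A) : Prop :=
  ∀ β ∈ S, ¬ attacks R S β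

/-- An argument `α` is acceptable w.r.t. `S` if every attacker of `α` is attacked by `S`. -/
def acceptable {A : Type*} (R : A → A → Prop) (α : A) (S : Set A) : Prop :=
  ∀ β, R β α → attacks R S β

/-- A set `S` is admissible if it is conflict-free and every argument in `S`
is acceptable with respect to `S`. -/
def admissible {A : Type*} (R : A → A → Prop) (S : Set A) : Prop :=
  conflictFree R S ∧ ∀ α ∈ S, acceptable R α S

/-- A set `S` is a complete extension if it is admissible and every argument
acceptable with respect to `S` belongs to `S`. -/
def completeExt {A : Type*} (R : A → A → Prop) (S : Set A) : Prop :=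
  admissible R S ∧ ∀ α, acceptable R α S → α ∈ S

/-- An AF is well-founded if there is no infinite sequence `α₀, α₁, …`
with `(α_{i+1}, α_i) ∈ R` for all `i`. -/
def wellFoundedAF {A : Type*} (R : A → A → Prop) : Prop :=
  ¬ ∃ f : ℕ → A, ∀ i : ℕ, R (f (i + 1)) (f i)

/-!
In a well-founded framework the attack relation supports well-founded induction. If `S` defends
each of its members and `T` contains every argument it defends, then every `α ∈ S` lies in `T`:
each attacker of `α` is counter-attacked by some `γ ∈ S` lying two attack steps below `α`, so
`γ ∈ T` by induction, hence `T` defends `α`. In particular every complete extension is contained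
in every other one, so no complete extension has a proper complete subset.
-/

theorem wellFoundedAF.wellFounded {A : Type*} {R : A → A → Prop} (hwf : wellFoundedAF R) :
    WellFounded R :=
  wellFounded_iff_isEmpty_descending_chain.mpr ⟨fun ⟨f, hf⟩ => hwf ⟨f, hf⟩⟩

theorem subset_of_wellFounded_of_forall_acceptable {A : Type*} {R : A → A → Prop}
    (hR : WellFounded R) {S T : Set A} (hS : ∀ α ∈ S, acceptable R α S)
    (hT : ∀ α, acceptable R α T → α ∈ T) : S ⊆ T := by
  intro α
  induction α using hR.transGen.induction with
  | _ α ih =>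
    intro hα
    refine hT α fun β hβα => ?_
    obtain ⟨γ, hγS, hγβ⟩ := hS α hα β hβα
    exact ⟨γ, ih γ (.head hγβ (.single hβα)) hγS, hγβ⟩

theorem completeExt.subset_of_wellFounded {A : Type*} {R : A → A → Prop} (hR : WellFounded R)
    {S T : Set A} (hS : completeExt R S) (hT : completeExt R T) : S ⊆ T :=
  subset_of_wellFounded_of_forall_acceptable hR hS.1.2 hT.2

/-- In a well-founded AF, every complete extension is a grounded extension,
i.e. a minimal (w.r.t. set inclusion) complete extension. -/
theorem wellFounded_complete_is_grounded {A : Type*} (R : A → A → Prop)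
    (hwf : wellFoundedAF R) (S : Set A) (hS : completeExt R S) :
    completeExt R S ∧ ∀ T : Set A, completeExt R T → T ⊆ S → T = S :=
  ⟨hS, fun _ hT hTS => hTS.antisymm (hS.subset_of_wellFounded hwf.wellFounded hT)⟩
end

section
/- In a well-founded abstract argumentation framework, every complete extension is a preferred extension, i.e., it is a maximal (with respect to set inclusion) admissible set. -/
lemma wf_of_wellFoundedAF {A : Type*} (R : A → A → Prop) (hwf : wellFoundedAF R) :
    WellFounded R := by
  constructor
  intro a
  by_contra h
  have step : ∀ x : A, ¬ Acc R x → ∃ y, R y x ∧ ¬ Acc R y := by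
    intro x hx
    by_contra hc
    push_neg at hc
    exact hx (Acc.intro x hc)
  let g : {x : A // ¬ Acc R x} → {x : A // ¬ Acc R x} := fun p =>
    ⟨(step p.1 p.2).choose, (step p.1 p.2).choose_spec.2⟩
  have hg : ∀ p : {x : A // ¬ Acc R x}, R (g p).1 p.1 := fun p =>
    (step p.1 p.2).choose_spec.1
  refine hwf ⟨fun n => (g^[n] ⟨a, h⟩).1, fun i => ?_⟩
  simp only []
  rw [Function.iterate_succ_apply']
  exact hg _

/-- In a well-founded AF, every complete extension is a preferred extension,
i.e. a maximal (w.r.t. set inclusion) admissible set. -/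
theorem wellFounded_complete_is_preferred {A : Type*} (R : A → A → Prop)
    (hwf : wellFoundedAF R) (S : Set A) (hS : completeExt R S) :
    admissible R S ∧ ∀ T : Set A, admissible R T → S ⊆ T → T = S := by
  have hwt : WellFounded (Relation.TransGen R) :=
    (wf_of_wellFoundedAF R hwf).transGen
  refine ⟨hS.1, fun T hT hST => ?_⟩
  have key : ∀ α : A, α ∈ T → α ∈ S := by
    intro α
    induction α using hwt.induction with
    | _ α ih =>
      intro hαT
      apply hS.2
      intro β hβα
      obtain ⟨γ, hγT, hγβ⟩ := hT.2 α hαT β hβα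
      have hγS : γ ∈ S :=
        ih γ (Relation.TransGen.head hγβ (Relation.TransGen.single hβα)) hγT
      exact ⟨γ, hγS, hγβ⟩
  exact Set.Subset.antisymm key hST
end

section
/- In a well-founded abstract argumentation framework, every admissible set of arguments is contained in every complete extension. -/
/-!
Induct along the attack relation, in fact along its transitive closure. If `α ∈ T` and `β`
attacks `α`, then `T` contains a defender `γ` attacking `β`; since `γ` lies two attack steps
below `α`, the induction hypothesis puts `γ` in `S`. So `S` defends `α`, and a complete
extension contains every argument it defends.
-/

section

variable {A : Type*} {R : A → A → Prop}

theorem wellFoundedAF_iff_wellFounded : wellFoundedAF R ↔ WellFounded R := by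
  rw [wellFounded_iff_isEmpty_descending_chain, isEmpty_subtype, wellFoundedAF, not_exists]

theorem subset_of_forall_acceptable (hR : WellFounded R) {T S : Set A}
    (hT : ∀ α ∈ T, acceptable R α T) (hS : ∀ α, acceptable R α S → α ∈ S) : T ⊆ S := by
  intro α hα
  induction α using hR.transGen.induction with
  | _ α ih =>
    refine hS α fun β hβα => ?_
    obtain ⟨γ, hγT, hγβ⟩ := hT α hα β hβα
    exact ⟨γ, ih γ (.head hγβ (.single hβα)) hγT, hγβ⟩

end

/-- In a well-founded AF, every admissible set of arguments is contained in
every complete extension. -/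
theorem wellFounded_admissible_subset_complete {A : Type*} (R : A → A → Prop)
    (hwf : wellFoundedAF R) (T S : Set A)
    (hT : admissible R T) (hS : completeExt R S) : T ⊆ S :=
  subset_of_forall_acceptable (wellFoundedAF_iff_wellFounded.mp hwf) hT.2 hS.2
end
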